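/- arXiv:2208.13808 — 2 statements merged into one kernel-verified Lean document; each statement's English description precedes it below -/
import Mathlib

section
/- Let $\lambda : \{1,\dots,5\}^2 \to \mathbb{R}$ be symmetric with nonzero off-diagonal entries, and suppose that for every $T \in \{1,\dots,5\}$ and every pair of complementary 2-element subsets $\{P,Q\}, \{R,S\}$ of $\{1,\dots,5\}\setminus\{T\}$, the product $\lambda_{PQ}\lambda_{RS}$ equals a constant $\Lambda_T$ depending only on $T$. Define $\lambda_1^2(c_5) := \lambda_{12}\lambda_{13}\lambda_{14}/\Lambda_5$ and $\lambda_1^2(c_4) := \lambda_{12}\lambda_{13}\lambda_{15}/\Lambda_4$ where $\Lambda_5 = \lambda_{12}\lambda_{34}$ and $\Lambda_4 = \lambda_{12}\lambda_{35}$. Then $\lambda_1^2(c_5) = \lambda_1^2(c_4)$. -/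
open Finset BigOperators

noncomputable section

/-- Totally antisymmetric symbol: sign of the tuple `a` (0 if entries repeat). -/
def epsSgn {n : ℕ} (a : Fin n → Fin n) : ℤ :=
  ∏ i : Fin n, ∏ j : Fin n,
    if i < j then (if a i < a j then 1 else if a j < a i then -1 else 0) else 1

/-- Levi-Civita symbol on five indices, `eps5 0 1 2 3 4 = 1`. -/
def eps5 (P Q R S T : Fin 5) : ℤ := epsSgn ![P, Q, R, S, T]

/-- Levi-Civita symbol on four indices, `eps4 0 1 2 3 = 1`. -/
def eps4 (I J K L : Fin 4) : ℤ := epsSgn ![I, J, K, L]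

/-- Diagonal entries of the Minkowski metric η = diag(-1,1,1,1). -/
def etaD (I : Fin 4) : ℝ := if I = 0 then -1 else 1

/-- The Minkowski metric η = diag(-1,1,1,1). -/
def eta (I J : Fin 4) : ℝ := if I = J then etaD I else 0

/-- Wedge product of two vectors, `(e ∧ f)^{IJ} = e^I f^J - e^J f^I`. -/
def wedgeV (e f : Fin 4 → ℝ) (I J : Fin 4) : ℝ := e I * f J - e J * f I

/-- Minkowski Hodge dual on 2-tensors: `(∗B)^{IJ} = (1/2) ε^{IJ}_{KL} B^{KL}`. -/
def hodge (B : Fin 4 → Fin 4 → ℝ) (I J : Fin 4) : ℝ :=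
  (1 / 2) * etaD I * etaD J * ∑ K : Fin 4, ∑ L : Fin 4, (eps4 I J K L : ℝ) * B K L

/-- The volume pairing `V(B,B') = ε_{IJKL} B^{IJ} B'^{KL}`. -/
def Vpair (B B' : Fin 4 → Fin 4 → ℝ) : ℝ :=
  ∑ I : Fin 4, ∑ J : Fin 4, ∑ K : Fin 4, ∑ L : Fin 4,
    (eps4 I J K L : ℝ) * B I J * B' K L

/-- Compatibility of the reconstruction across corner cells: with vertices
labelled `0,…,4` (for `1,…,5`), if for each `T` all products `λ_{PQ} λ_{RS}`
over complementary pairs of the remaining four indices equal `Λ_T`, then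
`λ₁²(c₅) = λ₁₂λ₁₃λ₁₄/(λ₁₂λ₃₄)` equals `λ₁²(c₄) = λ₁₂λ₁₃λ₁₅/(λ₁₂λ₃₅)`. -/
theorem corner_cell_compatibility (lam : Fin 5 → Fin 5 → ℝ) (Λ : Fin 5 → ℝ)
    (hsymm : ∀ P Q, lam P Q = lam Q P)
    (hne : ∀ P Q, P ≠ Q → lam P Q ≠ 0)
    (hΛ : ∀ T P Q R S : Fin 5, Function.Injective ![P, Q, R, S, T] →
      lam P Q * lam R S = Λ T) :
    (lam 0 1 * lam 0 2 * lam 0 3) / (lam 0 1 * lam 2 3)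
      = (lam 0 1 * lam 0 2 * lam 0 4) / (lam 0 1 * lam 2 4) := by
  have h1 : lam 0 3 * lam 2 4 = Λ 1 := hΛ 1 0 3 2 4 (by decide)
  have h2 : lam 0 4 * lam 2 3 = Λ 1 := hΛ 1 0 4 2 3 (by decide)
  have key : lam 0 3 * lam 2 4 = lam 0 4 * lam 2 3 := h1.trans h2.symm
  have n1 := hne 0 1 (by decide)
  have n2 := hne 2 3 (by decide)
  have n3 := hne 2 4 (by decide)
  field_simp
  linear_combination (lam 0 2) * key
end
end

section
/- Let $n_1, n_2, n_3, n_4 \in \mathbb{R}^4$ be linearly independent and let $B^{IJ} \in \Lambda^2\mathbb{R}^4$ be an antisymmetric tensor. Fix distinct $P, Q \in \{1,2,3,4\}$. Then $B$ satisfies $n_{P I} B^{IJ} = 0$ and $n_{Q I} B^{IJ} = 0$ (indices lowered with the nondegenerate metric $\eta$) if and only if $B = \lambda \, \ast(n_P \wedge n_Q)$ for some $\lambda \in \mathbb{R}$. -/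
open Finset BigOperators

noncomputable section

private lemma etaD0 : etaD 0 = -1 := if_pos rfl
private lemma etaD1 : etaD 1 = 1 := if_neg (by decide)
private lemma etaD2 : etaD 2 = 1 := if_neg (by decide)
private lemma etaD3 : etaD 3 = 1 := if_neg (by decide)

private lemma hw00 (a b : Fin 4 → ℝ) : hodge (wedgeV a b) 0 0 = 0 := by
  simp only [hodge, wedgeV, Fin.sum_univ_four]
  norm_num [etaD0, etaD1, etaD2, etaD3, show (eps4 0 0 0 0 : ℤ) = 0 from by decide,
    show (eps4 0 0 0 1 : ℤ) = 0 from by decide,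
    show (eps4 0 0 0 2 : ℤ) = 0 from by decide,
    show (eps4 0 0 0 3 : ℤ) = 0 from by decide,
    show (eps4 0 0 1 0 : ℤ) = 0 from by decide,
    show (eps4 0 0 1 1 : ℤ) = 0 from by decide,
    show (eps4 0 0 1 2 : ℤ) = 0 from by decide,
    show (eps4 0 0 1 3 : ℤ) = 0 from by decide,
    show (eps4 0 0 2 0 : ℤ) = 0 from by decide,
    show (eps4 0 0 2 1 : ℤ) = 0 from by decide,
    show (eps4 0 0 2 2 : ℤ) = 0 from by decide,
    show (eps4 0 0 2 3 : ℤ) = 0 from by decide,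
    show (eps4 0 0 3 0 : ℤ) = 0 from by decide,
    show (eps4 0 0 3 1 : ℤ) = 0 from by decide,
    show (eps4 0 0 3 2 : ℤ) = 0 from by decide,
    show (eps4 0 0 3 3 : ℤ) = 0 from by decide]
  try ring

private lemma hw01 (a b : Fin 4 → ℝ) : hodge (wedgeV a b) 0 1 = -a 2 * b 3 + a 3 * b 2 := by
  simp only [hodge, wedgeV, Fin.sum_univ_four]
  norm_num [etaD0, etaD1, etaD2, etaD3, show (eps4 0 1 0 0 : ℤ) = 0 from by decide,
    show (eps4 0 1 0 1 : ℤ) = 0 from by decide,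
    show (eps4 0 1 0 2 : ℤ) = 0 from by decide,
    show (eps4 0 1 0 3 : ℤ) = 0 from by decide,
    show (eps4 0 1 1 0 : ℤ) = 0 from by decide,
    show (eps4 0 1 1 1 : ℤ) = 0 from by decide,
    show (eps4 0 1 1 2 : ℤ) = 0 from by decide,
    show (eps4 0 1 1 3 : ℤ) = 0 from by decide,
    show (eps4 0 1 2 0 : ℤ) = 0 from by decide,
    show (eps4 0 1 2 1 : ℤ) = 0 from by decide,
    show (eps4 0 1 2 2 : ℤ) = 0 from by decide,
    show (eps4 0 1 2 3 : ℤ) = 1 from by decide,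
    show (eps4 0 1 3 0 : ℤ) = 0 from by decide,
    show (eps4 0 1 3 1 : ℤ) = 0 from by decide,
    show (eps4 0 1 3 2 : ℤ) = -1 from by decide,
    show (eps4 0 1 3 3 : ℤ) = 0 from by decide]
  try ring

private lemma hw02 (a b : Fin 4 → ℝ) : hodge (wedgeV a b) 0 2 = a 1 * b 3 - a 3 * b 1 := by
  simp only [hodge, wedgeV, Fin.sum_univ_four]
  norm_num [etaD0, etaD1, etaD2, etaD3, show (eps4 0 2 0 0 : ℤ) = 0 from by decide,
    show (eps4 0 2 0 1 : ℤ) = 0 from by decide,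
    show (eps4 0 2 0 2 : ℤ) = 0 from by decide,
    show (eps4 0 2 0 3 : ℤ) = 0 from by decide,
    show (eps4 0 2 1 0 : ℤ) = 0 from by decide,
    show (eps4 0 2 1 1 : ℤ) = 0 from by decide,
    show (eps4 0 2 1 2 : ℤ) = 0 from by decide,
    show (eps4 0 2 1 3 : ℤ) = -1 from by decide,
    show (eps4 0 2 2 0 : ℤ) = 0 from by decide,
    show (eps4 0 2 2 1 : ℤ) = 0 from by decide,
    show (eps4 0 2 2 2 : ℤ) = 0 from by decide,
    show (eps4 0 2 2 3 : ℤ) = 0 from by decide,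
    show (eps4 0 2 3 0 : ℤ) = 0 from by decide,
    show (eps4 0 2 3 1 : ℤ) = 1 from by decide,
    show (eps4 0 2 3 2 : ℤ) = 0 from by decide,
    show (eps4 0 2 3 3 : ℤ) = 0 from by decide]
  try ring

private lemma hw03 (a b : Fin 4 → ℝ) : hodge (wedgeV a b) 0 3 = -a 1 * b 2 + a 2 * b 1 := by
  simp only [hodge, wedgeV, Fin.sum_univ_four]
  norm_num [etaD0, etaD1, etaD2, etaD3, show (eps4 0 3 0 0 : ℤ) = 0 from by decide,
    show (eps4 0 3 0 1 : ℤ) = 0 from by decide,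
    show (eps4 0 3 0 2 : ℤ) = 0 from by decide,
    show (eps4 0 3 0 3 : ℤ) = 0 from by decide,
    show (eps4 0 3 1 0 : ℤ) = 0 from by decide,
    show (eps4 0 3 1 1 : ℤ) = 0 from by decide,
    show (eps4 0 3 1 2 : ℤ) = 1 from by decide,
    show (eps4 0 3 1 3 : ℤ) = 0 from by decide,
    show (eps4 0 3 2 0 : ℤ) = 0 from by decide,
    show (eps4 0 3 2 1 : ℤ) = -1 from by decide,
    show (eps4 0 3 2 2 : ℤ) = 0 from by decide,
    show (eps4 0 3 2 3 : ℤ) = 0 from by decide,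
    show (eps4 0 3 3 0 : ℤ) = 0 from by decide,
    show (eps4 0 3 3 1 : ℤ) = 0 from by decide,
    show (eps4 0 3 3 2 : ℤ) = 0 from by decide,
    show (eps4 0 3 3 3 : ℤ) = 0 from by decide]
  try ring

private lemma hw10 (a b : Fin 4 → ℝ) : hodge (wedgeV a b) 1 0 = a 2 * b 3 - a 3 * b 2 := by
  simp only [hodge, wedgeV, Fin.sum_univ_four]
  norm_num [etaD0, etaD1, etaD2, etaD3, show (eps4 1 0 0 0 : ℤ) = 0 from by decide,
    show (eps4 1 0 0 1 : ℤ) = 0 from by decide,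
    show (eps4 1 0 0 2 : ℤ) = 0 from by decide,
    show (eps4 1 0 0 3 : ℤ) = 0 from by decide,
    show (eps4 1 0 1 0 : ℤ) = 0 from by decide,
    show (eps4 1 0 1 1 : ℤ) = 0 from by decide,
    show (eps4 1 0 1 2 : ℤ) = 0 from by decide,
    show (eps4 1 0 1 3 : ℤ) = 0 from by decide,
    show (eps4 1 0 2 0 : ℤ) = 0 from by decide,
    show (eps4 1 0 2 1 : ℤ) = 0 from by decide,
    show (eps4 1 0 2 2 : ℤ) = 0 from by decide,
    show (eps4 1 0 2 3 : ℤ) = -1 from by decide,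
    show (eps4 1 0 3 0 : ℤ) = 0 from by decide,
    show (eps4 1 0 3 1 : ℤ) = 0 from by decide,
    show (eps4 1 0 3 2 : ℤ) = 1 from by decide,
    show (eps4 1 0 3 3 : ℤ) = 0 from by decide]
  try ring

private lemma hw11 (a b : Fin 4 → ℝ) : hodge (wedgeV a b) 1 1 = 0 := by
  simp only [hodge, wedgeV, Fin.sum_univ_four]
  norm_num [etaD0, etaD1, etaD2, etaD3, show (eps4 1 1 0 0 : ℤ) = 0 from by decide,
    show (eps4 1 1 0 1 : ℤ) = 0 from by decide,
    show (eps4 1 1 0 2 : ℤ) = 0 from by decide,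
    show (eps4 1 1 0 3 : ℤ) = 0 from by decide,
    show (eps4 1 1 1 0 : ℤ) = 0 from by decide,
    show (eps4 1 1 1 1 : ℤ) = 0 from by decide,
    show (eps4 1 1 1 2 : ℤ) = 0 from by decide,
    show (eps4 1 1 1 3 : ℤ) = 0 from by decide,
    show (eps4 1 1 2 0 : ℤ) = 0 from by decide,
    show (eps4 1 1 2 1 : ℤ) = 0 from by decide,
    show (eps4 1 1 2 2 : ℤ) = 0 from by decide,
    show (eps4 1 1 2 3 : ℤ) = 0 from by decide,
    show (eps4 1 1 3 0 : ℤ) = 0 from by decide,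
    show (eps4 1 1 3 1 : ℤ) = 0 from by decide,
    show (eps4 1 1 3 2 : ℤ) = 0 from by decide,
    show (eps4 1 1 3 3 : ℤ) = 0 from by decide]
  try ring

private lemma hw12 (a b : Fin 4 → ℝ) : hodge (wedgeV a b) 1 2 = a 0 * b 3 - a 3 * b 0 := by
  simp only [hodge, wedgeV, Fin.sum_univ_four]
  norm_num [etaD0, etaD1, etaD2, etaD3, show (eps4 1 2 0 0 : ℤ) = 0 from by decide,
    show (eps4 1 2 0 1 : ℤ) = 0 from by decide,
    show (eps4 1 2 0 2 : ℤ) = 0 from by decide,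
    show (eps4 1 2 0 3 : ℤ) = 1 from by decide,
    show (eps4 1 2 1 0 : ℤ) = 0 from by decide,
    show (eps4 1 2 1 1 : ℤ) = 0 from by decide,
    show (eps4 1 2 1 2 : ℤ) = 0 from by decide,
    show (eps4 1 2 1 3 : ℤ) = 0 from by decide,
    show (eps4 1 2 2 0 : ℤ) = 0 from by decide,
    show (eps4 1 2 2 1 : ℤ) = 0 from by decide,
    show (eps4 1 2 2 2 : ℤ) = 0 from by decide,
    show (eps4 1 2 2 3 : ℤ) = 0 from by decide,
    show (eps4 1 2 3 0 : ℤ) = -1 from by decide,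
    show (eps4 1 2 3 1 : ℤ) = 0 from by decide,
    show (eps4 1 2 3 2 : ℤ) = 0 from by decide,
    show (eps4 1 2 3 3 : ℤ) = 0 from by decide]
  try ring

private lemma hw13 (a b : Fin 4 → ℝ) : hodge (wedgeV a b) 1 3 = -a 0 * b 2 + a 2 * b 0 := by
  simp only [hodge, wedgeV, Fin.sum_univ_four]
  norm_num [etaD0, etaD1, etaD2, etaD3, show (eps4 1 3 0 0 : ℤ) = 0 from by decide,
    show (eps4 1 3 0 1 : ℤ) = 0 from by decide,
    show (eps4 1 3 0 2 : ℤ) = -1 from by decide,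
    show (eps4 1 3 0 3 : ℤ) = 0 from by decide,
    show (eps4 1 3 1 0 : ℤ) = 0 from by decide,
    show (eps4 1 3 1 1 : ℤ) = 0 from by decide,
    show (eps4 1 3 1 2 : ℤ) = 0 from by decide,
    show (eps4 1 3 1 3 : ℤ) = 0 from by decide,
    show (eps4 1 3 2 0 : ℤ) = 1 from by decide,
    show (eps4 1 3 2 1 : ℤ) = 0 from by decide,
    show (eps4 1 3 2 2 : ℤ) = 0 from by decide,
    show (eps4 1 3 2 3 : ℤ) = 0 from by decide,
    show (eps4 1 3 3 0 : ℤ) = 0 from by decide,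
    show (eps4 1 3 3 1 : ℤ) = 0 from by decide,
    show (eps4 1 3 3 2 : ℤ) = 0 from by decide,
    show (eps4 1 3 3 3 : ℤ) = 0 from by decide]
  try ring

private lemma hw20 (a b : Fin 4 → ℝ) : hodge (wedgeV a b) 2 0 = -a 1 * b 3 + a 3 * b 1 := by
  simp only [hodge, wedgeV, Fin.sum_univ_four]
  norm_num [etaD0, etaD1, etaD2, etaD3, show (eps4 2 0 0 0 : ℤ) = 0 from by decide,
    show (eps4 2 0 0 1 : ℤ) = 0 from by decide,
    show (eps4 2 0 0 2 : ℤ) = 0 from by decide,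
    show (eps4 2 0 0 3 : ℤ) = 0 from by decide,
    show (eps4 2 0 1 0 : ℤ) = 0 from by decide,
    show (eps4 2 0 1 1 : ℤ) = 0 from by decide,
    show (eps4 2 0 1 2 : ℤ) = 0 from by decide,
    show (eps4 2 0 1 3 : ℤ) = 1 from by decide,
    show (eps4 2 0 2 0 : ℤ) = 0 from by decide,
    show (eps4 2 0 2 1 : ℤ) = 0 from by decide,
    show (eps4 2 0 2 2 : ℤ) = 0 from by decide,
    show (eps4 2 0 2 3 : ℤ) = 0 from by decide,
    show (eps4 2 0 3 0 : ℤ) = 0 from by decide,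
    show (eps4 2 0 3 1 : ℤ) = -1 from by decide,
    show (eps4 2 0 3 2 : ℤ) = 0 from by decide,
    show (eps4 2 0 3 3 : ℤ) = 0 from by decide]
  try ring

private lemma hw21 (a b : Fin 4 → ℝ) : hodge (wedgeV a b) 2 1 = -a 0 * b 3 + a 3 * b 0 := by
  simp only [hodge, wedgeV, Fin.sum_univ_four]
  norm_num [etaD0, etaD1, etaD2, etaD3, show (eps4 2 1 0 0 : ℤ) = 0 from by decide,
    show (eps4 2 1 0 1 : ℤ) = 0 from by decide,
    show (eps4 2 1 0 2 : ℤ) = 0 from by decide,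
    show (eps4 2 1 0 3 : ℤ) = -1 from by decide,
    show (eps4 2 1 1 0 : ℤ) = 0 from by decide,
    show (eps4 2 1 1 1 : ℤ) = 0 from by decide,
    show (eps4 2 1 1 2 : ℤ) = 0 from by decide,
    show (eps4 2 1 1 3 : ℤ) = 0 from by decide,
    show (eps4 2 1 2 0 : ℤ) = 0 from by decide,
    show (eps4 2 1 2 1 : ℤ) = 0 from by decide,
    show (eps4 2 1 2 2 : ℤ) = 0 from by decide,
    show (eps4 2 1 2 3 : ℤ) = 0 from by decide,
    show (eps4 2 1 3 0 : ℤ) = 1 from by decide,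
    show (eps4 2 1 3 1 : ℤ) = 0 from by decide,
    show (eps4 2 1 3 2 : ℤ) = 0 from by decide,
    show (eps4 2 1 3 3 : ℤ) = 0 from by decide]
  try ring

private lemma hw22 (a b : Fin 4 → ℝ) : hodge (wedgeV a b) 2 2 = 0 := by
  simp only [hodge, wedgeV, Fin.sum_univ_four]
  norm_num [etaD0, etaD1, etaD2, etaD3, show (eps4 2 2 0 0 : ℤ) = 0 from by decide,
    show (eps4 2 2 0 1 : ℤ) = 0 from by decide,
    show (eps4 2 2 0 2 : ℤ) = 0 from by decide,
    show (eps4 2 2 0 3 : ℤ) = 0 from by decide,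
    show (eps4 2 2 1 0 : ℤ) = 0 from by decide,
    show (eps4 2 2 1 1 : ℤ) = 0 from by decide,
    show (eps4 2 2 1 2 : ℤ) = 0 from by decide,
    show (eps4 2 2 1 3 : ℤ) = 0 from by decide,
    show (eps4 2 2 2 0 : ℤ) = 0 from by decide,
    show (eps4 2 2 2 1 : ℤ) = 0 from by decide,
    show (eps4 2 2 2 2 : ℤ) = 0 from by decide,
    show (eps4 2 2 2 3 : ℤ) = 0 from by decide,
    show (eps4 2 2 3 0 : ℤ) = 0 from by decide,
    show (eps4 2 2 3 1 : ℤ) = 0 from by decide,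
    show (eps4 2 2 3 2 : ℤ) = 0 from by decide,
    show (eps4 2 2 3 3 : ℤ) = 0 from by decide]
  try ring

private lemma hw23 (a b : Fin 4 → ℝ) : hodge (wedgeV a b) 2 3 = a 0 * b 1 - a 1 * b 0 := by
  simp only [hodge, wedgeV, Fin.sum_univ_four]
  norm_num [etaD0, etaD1, etaD2, etaD3, show (eps4 2 3 0 0 : ℤ) = 0 from by decide,
    show (eps4 2 3 0 1 : ℤ) = 1 from by decide,
    show (eps4 2 3 0 2 : ℤ) = 0 from by decide,
    show (eps4 2 3 0 3 : ℤ) = 0 from by decide,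
    show (eps4 2 3 1 0 : ℤ) = -1 from by decide,
    show (eps4 2 3 1 1 : ℤ) = 0 from by decide,
    show (eps4 2 3 1 2 : ℤ) = 0 from by decide,
    show (eps4 2 3 1 3 : ℤ) = 0 from by decide,
    show (eps4 2 3 2 0 : ℤ) = 0 from by decide,
    show (eps4 2 3 2 1 : ℤ) = 0 from by decide,
    show (eps4 2 3 2 2 : ℤ) = 0 from by decide,
    show (eps4 2 3 2 3 : ℤ) = 0 from by decide,
    show (eps4 2 3 3 0 : ℤ) = 0 from by decide,
    show (eps4 2 3 3 1 : ℤ) = 0 from by decide,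
    show (eps4 2 3 3 2 : ℤ) = 0 from by decide,
    show (eps4 2 3 3 3 : ℤ) = 0 from by decide]
  try ring

private lemma hw30 (a b : Fin 4 → ℝ) : hodge (wedgeV a b) 3 0 = a 1 * b 2 - a 2 * b 1 := by
  simp only [hodge, wedgeV, Fin.sum_univ_four]
  norm_num [etaD0, etaD1, etaD2, etaD3, show (eps4 3 0 0 0 : ℤ) = 0 from by decide,
    show (eps4 3 0 0 1 : ℤ) = 0 from by decide,
    show (eps4 3 0 0 2 : ℤ) = 0 from by decide,
    show (eps4 3 0 0 3 : ℤ) = 0 from by decide,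
    show (eps4 3 0 1 0 : ℤ) = 0 from by decide,
    show (eps4 3 0 1 1 : ℤ) = 0 from by decide,
    show (eps4 3 0 1 2 : ℤ) = -1 from by decide,
    show (eps4 3 0 1 3 : ℤ) = 0 from by decide,
    show (eps4 3 0 2 0 : ℤ) = 0 from by decide,
    show (eps4 3 0 2 1 : ℤ) = 1 from by decide,
    show (eps4 3 0 2 2 : ℤ) = 0 from by decide,
    show (eps4 3 0 2 3 : ℤ) = 0 from by decide,
    show (eps4 3 0 3 0 : ℤ) = 0 from by decide,
    show (eps4 3 0 3 1 : ℤ) = 0 from by decide,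
    show (eps4 3 0 3 2 : ℤ) = 0 from by decide,
    show (eps4 3 0 3 3 : ℤ) = 0 from by decide]
  try ring

private lemma hw31 (a b : Fin 4 → ℝ) : hodge (wedgeV a b) 3 1 = a 0 * b 2 - a 2 * b 0 := by
  simp only [hodge, wedgeV, Fin.sum_univ_four]
  norm_num [etaD0, etaD1, etaD2, etaD3, show (eps4 3 1 0 0 : ℤ) = 0 from by decide,
    show (eps4 3 1 0 1 : ℤ) = 0 from by decide,
    show (eps4 3 1 0 2 : ℤ) = 1 from by decide,
    show (eps4 3 1 0 3 : ℤ) = 0 from by decide,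
    show (eps4 3 1 1 0 : ℤ) = 0 from by decide,
    show (eps4 3 1 1 1 : ℤ) = 0 from by decide,
    show (eps4 3 1 1 2 : ℤ) = 0 from by decide,
    show (eps4 3 1 1 3 : ℤ) = 0 from by decide,
    show (eps4 3 1 2 0 : ℤ) = -1 from by decide,
    show (eps4 3 1 2 1 : ℤ) = 0 from by decide,
    show (eps4 3 1 2 2 : ℤ) = 0 from by decide,
    show (eps4 3 1 2 3 : ℤ) = 0 from by decide,
    show (eps4 3 1 3 0 : ℤ) = 0 from by decide,
    show (eps4 3 1 3 1 : ℤ) = 0 from by decide,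
    show (eps4 3 1 3 2 : ℤ) = 0 from by decide,
    show (eps4 3 1 3 3 : ℤ) = 0 from by decide]
  try ring

private lemma hw32 (a b : Fin 4 → ℝ) : hodge (wedgeV a b) 3 2 = -a 0 * b 1 + a 1 * b 0 := by
  simp only [hodge, wedgeV, Fin.sum_univ_four]
  norm_num [etaD0, etaD1, etaD2, etaD3, show (eps4 3 2 0 0 : ℤ) = 0 from by decide,
    show (eps4 3 2 0 1 : ℤ) = -1 from by decide,
    show (eps4 3 2 0 2 : ℤ) = 0 from by decide,
    show (eps4 3 2 0 3 : ℤ) = 0 from by decide,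
    show (eps4 3 2 1 0 : ℤ) = 1 from by decide,
    show (eps4 3 2 1 1 : ℤ) = 0 from by decide,
    show (eps4 3 2 1 2 : ℤ) = 0 from by decide,
    show (eps4 3 2 1 3 : ℤ) = 0 from by decide,
    show (eps4 3 2 2 0 : ℤ) = 0 from by decide,
    show (eps4 3 2 2 1 : ℤ) = 0 from by decide,
    show (eps4 3 2 2 2 : ℤ) = 0 from by decide,
    show (eps4 3 2 2 3 : ℤ) = 0 from by decide,
    show (eps4 3 2 3 0 : ℤ) = 0 from by decide,
    show (eps4 3 2 3 1 : ℤ) = 0 from by decide,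
    show (eps4 3 2 3 2 : ℤ) = 0 from by decide,
    show (eps4 3 2 3 3 : ℤ) = 0 from by decide]
  try ring

private lemma hw33 (a b : Fin 4 → ℝ) : hodge (wedgeV a b) 3 3 = 0 := by
  simp only [hodge, wedgeV, Fin.sum_univ_four]
  norm_num [etaD0, etaD1, etaD2, etaD3, show (eps4 3 3 0 0 : ℤ) = 0 from by decide,
    show (eps4 3 3 0 1 : ℤ) = 0 from by decide,
    show (eps4 3 3 0 2 : ℤ) = 0 from by decide,
    show (eps4 3 3 0 3 : ℤ) = 0 from by decide,
    show (eps4 3 3 1 0 : ℤ) = 0 from by decide,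
    show (eps4 3 3 1 1 : ℤ) = 0 from by decide,
    show (eps4 3 3 1 2 : ℤ) = 0 from by decide,
    show (eps4 3 3 1 3 : ℤ) = 0 from by decide,
    show (eps4 3 3 2 0 : ℤ) = 0 from by decide,
    show (eps4 3 3 2 1 : ℤ) = 0 from by decide,
    show (eps4 3 3 2 2 : ℤ) = 0 from by decide,
    show (eps4 3 3 2 3 : ℤ) = 0 from by decide,
    show (eps4 3 3 3 0 : ℤ) = 0 from by decide,
    show (eps4 3 3 3 1 : ℤ) = 0 from by decide,
    show (eps4 3 3 3 2 : ℤ) = 0 from by decide,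
    show (eps4 3 3 3 3 : ℤ) = 0 from by decide]
  try ring

private lemma simpCase01 (a0 a1 a2 a3 b0 b1 b2 b3 B01 B02 B03 B12 B13 B23 : ℝ)
    (hp0 : -B01 * a1 - B02 * a2 - B03 * a3 = 0)
    (hp1 : -B01 * a0 - B12 * a2 - B13 * a3 = 0)
    (hp2 : -B02 * a0 + B12 * a1 - B23 * a3 = 0)
    (hp3 : -B03 * a0 + B13 * a1 + B23 * a2 = 0)
    (hq0 : -B01 * b1 - B02 * b2 - B03 * b3 = 0)
    (hq1 : -B01 * b0 - B12 * b2 - B13 * b3 = 0)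
    (hq2 : -B02 * b0 + B12 * b1 - B23 * b3 = 0)
    (hq3 : -B03 * b0 + B13 * b1 + B23 * b2 = 0)
    (hm : a0 * b1 - a1 * b0 ≠ 0) :
    ∃ l : ℝ, B01 = l * (-a2 * b3 + a3 * b2) ∧ B02 = l * (a1 * b3 - a3 * b1) ∧ B03 = l * (-a1 * b2 + a2 * b1) ∧ B12 = l * (a0 * b3 - a3 * b0) ∧ B13 = l * (-a0 * b2 + a2 * b0) ∧ B23 = l * (a0 * b1 - a1 * b0) := by
  refine ⟨B23 / (a0 * b1 - a1 * b0), ?_, ?_, ?_, ?_, ?_, ?_⟩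
  · rw [div_mul_eq_mul_div, eq_div_iff hm]
    linear_combination b2 * hp2 + b3 * hp3 - a0 * hq0 + a1 * hq1
  · rw [div_mul_eq_mul_div, eq_div_iff hm]
    linear_combination -b1 * hp2 + a1 * hq2
  · rw [div_mul_eq_mul_div, eq_div_iff hm]
    linear_combination -b1 * hp3 + a1 * hq3
  · rw [div_mul_eq_mul_div, eq_div_iff hm]
    linear_combination -b0 * hp2 + a0 * hq2
  · rw [div_mul_eq_mul_div, eq_div_iff hm]
    linear_combination -b0 * hp3 + a0 * hq3
  · rw [div_mul_eq_mul_div, eq_div_iff hm]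
    try ring

private lemma simpCase02 (a0 a1 a2 a3 b0 b1 b2 b3 B01 B02 B03 B12 B13 B23 : ℝ)
    (hp0 : -B01 * a1 - B02 * a2 - B03 * a3 = 0)
    (hp1 : -B01 * a0 - B12 * a2 - B13 * a3 = 0)
    (hp2 : -B02 * a0 + B12 * a1 - B23 * a3 = 0)
    (hp3 : -B03 * a0 + B13 * a1 + B23 * a2 = 0)
    (hq0 : -B01 * b1 - B02 * b2 - B03 * b3 = 0)
    (hq1 : -B01 * b0 - B12 * b2 - B13 * b3 = 0)
    (hq2 : -B02 * b0 + B12 * b1 - B23 * b3 = 0)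
    (hq3 : -B03 * b0 + B13 * b1 + B23 * b2 = 0)
    (hm : a0 * b2 - a2 * b0 ≠ 0) :
    ∃ l : ℝ, B01 = l * (-a2 * b3 + a3 * b2) ∧ B02 = l * (a1 * b3 - a3 * b1) ∧ B03 = l * (-a1 * b2 + a2 * b1) ∧ B12 = l * (a0 * b3 - a3 * b0) ∧ B13 = l * (-a0 * b2 + a2 * b0) ∧ B23 = l * (a0 * b1 - a1 * b0) := by
  refine ⟨(-B13) / (a0 * b2 - a2 * b0), ?_, ?_, ?_, ?_, ?_, ?_⟩
  · rw [div_mul_eq_mul_div, eq_div_iff hm]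
    linear_combination -b2 * hp1 + a2 * hq1
  · rw [div_mul_eq_mul_div, eq_div_iff hm]
    linear_combination b1 * hp1 + b3 * hp3 - a0 * hq0 + a2 * hq2
  · rw [div_mul_eq_mul_div, eq_div_iff hm]
    linear_combination -b2 * hp3 + a2 * hq3
  · rw [div_mul_eq_mul_div, eq_div_iff hm]
    linear_combination b0 * hp1 - a0 * hq1
  · rw [div_mul_eq_mul_div, eq_div_iff hm]
    try ring
  · rw [div_mul_eq_mul_div, eq_div_iff hm]
    linear_combination -b0 * hp3 + a0 * hq3

private lemma simpCase03 (a0 a1 a2 a3 b0 b1 b2 b3 B01 B02 B03 B12 B13 B23 : ℝ)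
    (hp0 : -B01 * a1 - B02 * a2 - B03 * a3 = 0)
    (hp1 : -B01 * a0 - B12 * a2 - B13 * a3 = 0)
    (hp2 : -B02 * a0 + B12 * a1 - B23 * a3 = 0)
    (hp3 : -B03 * a0 + B13 * a1 + B23 * a2 = 0)
    (hq0 : -B01 * b1 - B02 * b2 - B03 * b3 = 0)
    (hq1 : -B01 * b0 - B12 * b2 - B13 * b3 = 0)
    (hq2 : -B02 * b0 + B12 * b1 - B23 * b3 = 0)
    (hq3 : -B03 * b0 + B13 * b1 + B23 * b2 = 0)
    (hm : a0 * b3 - a3 * b0 ≠ 0) :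
    ∃ l : ℝ, B01 = l * (-a2 * b3 + a3 * b2) ∧ B02 = l * (a1 * b3 - a3 * b1) ∧ B03 = l * (-a1 * b2 + a2 * b1) ∧ B12 = l * (a0 * b3 - a3 * b0) ∧ B13 = l * (-a0 * b2 + a2 * b0) ∧ B23 = l * (a0 * b1 - a1 * b0) := by
  refine ⟨B12 / (a0 * b3 - a3 * b0), ?_, ?_, ?_, ?_, ?_, ?_⟩
  · rw [div_mul_eq_mul_div, eq_div_iff hm]
    linear_combination -b3 * hp1 + a3 * hq1
  · rw [div_mul_eq_mul_div, eq_div_iff hm]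
    linear_combination -b3 * hp2 + a3 * hq2
  · rw [div_mul_eq_mul_div, eq_div_iff hm]
    linear_combination b0 * hp0 - b3 * hp3 - a1 * hq1 - a2 * hq2
  · rw [div_mul_eq_mul_div, eq_div_iff hm]
    try ring
  · rw [div_mul_eq_mul_div, eq_div_iff hm]
    linear_combination b0 * hp1 - a0 * hq1
  · rw [div_mul_eq_mul_div, eq_div_iff hm]
    linear_combination b0 * hp2 - a0 * hq2

private lemma simpCase12 (a0 a1 a2 a3 b0 b1 b2 b3 B01 B02 B03 B12 B13 B23 : ℝ)
    (hp0 : -B01 * a1 - B02 * a2 - B03 * a3 = 0)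
    (hp1 : -B01 * a0 - B12 * a2 - B13 * a3 = 0)
    (hp2 : -B02 * a0 + B12 * a1 - B23 * a3 = 0)
    (hp3 : -B03 * a0 + B13 * a1 + B23 * a2 = 0)
    (hq0 : -B01 * b1 - B02 * b2 - B03 * b3 = 0)
    (hq1 : -B01 * b0 - B12 * b2 - B13 * b3 = 0)
    (hq2 : -B02 * b0 + B12 * b1 - B23 * b3 = 0)
    (hq3 : -B03 * b0 + B13 * b1 + B23 * b2 = 0)
    (hm : a1 * b2 - a2 * b1 ≠ 0) :
    ∃ l : ℝ, B01 = l * (-a2 * b3 + a3 * b2) ∧ B02 = l * (a1 * b3 - a3 * b1) ∧ B03 = l * (-a1 * b2 + a2 * b1) ∧ B12 = l * (a0 * b3 - a3 * b0) ∧ B13 = l * (-a0 * b2 + a2 * b0) ∧ B23 = l * (a0 * b1 - a1 * b0) := by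
  refine ⟨(-B03) / (a1 * b2 - a2 * b1), ?_, ?_, ?_, ?_, ?_, ?_⟩
  · rw [div_mul_eq_mul_div, eq_div_iff hm]
    linear_combination -b2 * hp0 + a2 * hq0
  · rw [div_mul_eq_mul_div, eq_div_iff hm]
    linear_combination b1 * hp0 - a1 * hq0
  · rw [div_mul_eq_mul_div, eq_div_iff hm]
    try ring
  · rw [div_mul_eq_mul_div, eq_div_iff hm]
    linear_combination b0 * hp0 - b3 * hp3 - a1 * hq1 - a2 * hq2
  · rw [div_mul_eq_mul_div, eq_div_iff hm]
    linear_combination b2 * hp3 - a2 * hq3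
  · rw [div_mul_eq_mul_div, eq_div_iff hm]
    linear_combination -b1 * hp3 + a1 * hq3

private lemma simpCase13 (a0 a1 a2 a3 b0 b1 b2 b3 B01 B02 B03 B12 B13 B23 : ℝ)
    (hp0 : -B01 * a1 - B02 * a2 - B03 * a3 = 0)
    (hp1 : -B01 * a0 - B12 * a2 - B13 * a3 = 0)
    (hp2 : -B02 * a0 + B12 * a1 - B23 * a3 = 0)
    (hp3 : -B03 * a0 + B13 * a1 + B23 * a2 = 0)
    (hq0 : -B01 * b1 - B02 * b2 - B03 * b3 = 0)
    (hq1 : -B01 * b0 - B12 * b2 - B13 * b3 = 0)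
    (hq2 : -B02 * b0 + B12 * b1 - B23 * b3 = 0)
    (hq3 : -B03 * b0 + B13 * b1 + B23 * b2 = 0)
    (hm : a1 * b3 - a3 * b1 ≠ 0) :
    ∃ l : ℝ, B01 = l * (-a2 * b3 + a3 * b2) ∧ B02 = l * (a1 * b3 - a3 * b1) ∧ B03 = l * (-a1 * b2 + a2 * b1) ∧ B12 = l * (a0 * b3 - a3 * b0) ∧ B13 = l * (-a0 * b2 + a2 * b0) ∧ B23 = l * (a0 * b1 - a1 * b0) := by
  refine ⟨B02 / (a1 * b3 - a3 * b1), ?_, ?_, ?_, ?_, ?_, ?_⟩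
  · rw [div_mul_eq_mul_div, eq_div_iff hm]
    linear_combination -b3 * hp0 + a3 * hq0
  · rw [div_mul_eq_mul_div, eq_div_iff hm]
    try ring
  · rw [div_mul_eq_mul_div, eq_div_iff hm]
    linear_combination b1 * hp0 - a1 * hq0
  · rw [div_mul_eq_mul_div, eq_div_iff hm]
    linear_combination b3 * hp2 - a3 * hq2
  · rw [div_mul_eq_mul_div, eq_div_iff hm]
    linear_combination b1 * hp1 + b3 * hp3 - a0 * hq0 + a2 * hq2
  · rw [div_mul_eq_mul_div, eq_div_iff hm]
    linear_combination b1 * hp2 - a1 * hq2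

private lemma simpCase23 (a0 a1 a2 a3 b0 b1 b2 b3 B01 B02 B03 B12 B13 B23 : ℝ)
    (hp0 : -B01 * a1 - B02 * a2 - B03 * a3 = 0)
    (hp1 : -B01 * a0 - B12 * a2 - B13 * a3 = 0)
    (hp2 : -B02 * a0 + B12 * a1 - B23 * a3 = 0)
    (hp3 : -B03 * a0 + B13 * a1 + B23 * a2 = 0)
    (hq0 : -B01 * b1 - B02 * b2 - B03 * b3 = 0)
    (hq1 : -B01 * b0 - B12 * b2 - B13 * b3 = 0)
    (hq2 : -B02 * b0 + B12 * b1 - B23 * b3 = 0)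
    (hq3 : -B03 * b0 + B13 * b1 + B23 * b2 = 0)
    (hm : a2 * b3 - a3 * b2 ≠ 0) :
    ∃ l : ℝ, B01 = l * (-a2 * b3 + a3 * b2) ∧ B02 = l * (a1 * b3 - a3 * b1) ∧ B03 = l * (-a1 * b2 + a2 * b1) ∧ B12 = l * (a0 * b3 - a3 * b0) ∧ B13 = l * (-a0 * b2 + a2 * b0) ∧ B23 = l * (a0 * b1 - a1 * b0) := by
  refine ⟨(-B01) / (a2 * b3 - a3 * b2), ?_, ?_, ?_, ?_, ?_, ?_⟩
  · rw [div_mul_eq_mul_div, eq_div_iff hm]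
    try ring
  · rw [div_mul_eq_mul_div, eq_div_iff hm]
    linear_combination -b3 * hp0 + a3 * hq0
  · rw [div_mul_eq_mul_div, eq_div_iff hm]
    linear_combination b2 * hp0 - a2 * hq0
  · rw [div_mul_eq_mul_div, eq_div_iff hm]
    linear_combination -b3 * hp1 + a3 * hq1
  · rw [div_mul_eq_mul_div, eq_div_iff hm]
    linear_combination b2 * hp1 - a2 * hq1
  · rw [div_mul_eq_mul_div, eq_div_iff hm]
    linear_combination b2 * hp2 + b3 * hp3 - a0 * hq0 + a1 * hq1

private lemma hcola (a b : Fin 4 → ℝ) (J : Fin 4) :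
    -(a 0 * hodge (wedgeV a b) 0 J) + a 1 * hodge (wedgeV a b) 1 J + a 2 * hodge (wedgeV a b) 2 J + a 3 * hodge (wedgeV a b) 3 J = 0 := by
  fin_cases J
  · show -(a 0 * hodge (wedgeV a b) 0 0) + a 1 * hodge (wedgeV a b) 1 0 + a 2 * hodge (wedgeV a b) 2 0 + a 3 * hodge (wedgeV a b) 3 0 = 0
    rw [hw00 a b, hw10 a b, hw20 a b, hw30 a b]; ring
  · show -(a 0 * hodge (wedgeV a b) 0 1) + a 1 * hodge (wedgeV a b) 1 1 + a 2 * hodge (wedgeV a b) 2 1 + a 3 * hodge (wedgeV a b) 3 1 = 0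
    rw [hw01 a b, hw11 a b, hw21 a b, hw31 a b]; ring
  · show -(a 0 * hodge (wedgeV a b) 0 2) + a 1 * hodge (wedgeV a b) 1 2 + a 2 * hodge (wedgeV a b) 2 2 + a 3 * hodge (wedgeV a b) 3 2 = 0
    rw [hw02 a b, hw12 a b, hw22 a b, hw32 a b]; ring
  · show -(a 0 * hodge (wedgeV a b) 0 3) + a 1 * hodge (wedgeV a b) 1 3 + a 2 * hodge (wedgeV a b) 2 3 + a 3 * hodge (wedgeV a b) 3 3 = 0
    rw [hw03 a b, hw13 a b, hw23 a b, hw33 a b]; ring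

private lemma hcolb (a b : Fin 4 → ℝ) (J : Fin 4) :
    -(b 0 * hodge (wedgeV a b) 0 J) + b 1 * hodge (wedgeV a b) 1 J + b 2 * hodge (wedgeV a b) 2 J + b 3 * hodge (wedgeV a b) 3 J = 0 := by
  fin_cases J
  · show -(b 0 * hodge (wedgeV a b) 0 0) + b 1 * hodge (wedgeV a b) 1 0 + b 2 * hodge (wedgeV a b) 2 0 + b 3 * hodge (wedgeV a b) 3 0 = 0
    rw [hw00 a b, hw10 a b, hw20 a b, hw30 a b]; ring
  · show -(b 0 * hodge (wedgeV a b) 0 1) + b 1 * hodge (wedgeV a b) 1 1 + b 2 * hodge (wedgeV a b) 2 1 + b 3 * hodge (wedgeV a b) 3 1 = 0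
    rw [hw01 a b, hw11 a b, hw21 a b, hw31 a b]; ring
  · show -(b 0 * hodge (wedgeV a b) 0 2) + b 1 * hodge (wedgeV a b) 1 2 + b 2 * hodge (wedgeV a b) 2 2 + b 3 * hodge (wedgeV a b) 3 2 = 0
    rw [hw02 a b, hw12 a b, hw22 a b, hw32 a b]; ring
  · show -(b 0 * hodge (wedgeV a b) 0 3) + b 1 * hodge (wedgeV a b) 1 3 + b 2 * hodge (wedgeV a b) 2 3 + b 3 * hodge (wedgeV a b) 3 3 = 0
    rw [hw03 a b, hw13 a b, hw23 a b, hw33 a b]; ring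

private lemma simpMinor (a b : Fin 4 → ℝ) (h : LinearIndependent ℝ ![a, b]) :
    ∃ i j, a i * b j ≠ a j * b i := by
  by_contra hc
  push_neg at hc
  rw [linearIndependent_fin2] at h
  obtain ⟨hb, hab⟩ := h
  obtain ⟨j, hj⟩ : ∃ j, b j ≠ 0 := by
    by_contra hz; push_neg at hz; exact hb (funext hz)
  refine hab (a j / b j) (funext fun i => ?_)
  simp only [Pi.smul_apply, smul_eq_mul, Matrix.cons_val_one, Matrix.cons_val_zero, Matrix.head_cons]
  field_simp
  linear_combination hc j i

private lemma simpKey (a b : Fin 4 → ℝ) (B : Fin 4 → Fin 4 → ℝ)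
    (hanti : ∀ I J, B I J = -B J I)
    (hp : ∀ J, (∑ I : Fin 4, etaD I * a I * B I J) = 0)
    (hq : ∀ J, (∑ I : Fin 4, etaD I * b I * B I J) = 0)
    (hm : ∃ i j, a i * b j ≠ a j * b i) :
    ∃ l : ℝ, ∀ I J, B I J = l * hodge (wedgeV a b) I J := by
  have hd : ∀ I, B I I = 0 := fun I => by have := hanti I I; linarith
  have ep : ∀ J, -(a 0 * B 0 J) + a 1 * B 1 J + a 2 * B 2 J + a 3 * B 3 J = 0 := by
    intro J; have := hp J
    simp only [Fin.sum_univ_four, etaD0, etaD1, etaD2, etaD3] at this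
    linear_combination this
  have eq' : ∀ J, -(b 0 * B 0 J) + b 1 * B 1 J + b 2 * B 2 J + b 3 * B 3 J = 0 := by
    intro J; have := hq J
    simp only [Fin.sum_univ_four, etaD0, etaD1, etaD2, etaD3] at this
    linear_combination this
  have hp0' : -B 0 1 * a 1 - B 0 2 * a 2 - B 0 3 * a 3 = 0 := by linear_combination ep 0 - a 1 * hanti 1 0 - a 2 * hanti 2 0 - a 3 * hanti 3 0 + (a 0 / 2) * hanti 0 0
  have hp1' : -B 0 1 * a 0 - B 1 2 * a 2 - B 1 3 * a 3 = 0 := by linear_combination ep 1 - a 2 * hanti 2 1 - a 3 * hanti 3 1 - (a 1 / 2) * hanti 1 1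
  have hp2' : -B 0 2 * a 0 + B 1 2 * a 1 - B 2 3 * a 3 = 0 := by linear_combination ep 2 - a 3 * hanti 3 2 - (a 2 / 2) * hanti 2 2
  have hp3' : -B 0 3 * a 0 + B 1 3 * a 1 + B 2 3 * a 2 = 0 := by linear_combination ep 3 - (a 3 / 2) * hanti 3 3
  have hq0' : -B 0 1 * b 1 - B 0 2 * b 2 - B 0 3 * b 3 = 0 := by linear_combination eq' 0 - b 1 * hanti 1 0 - b 2 * hanti 2 0 - b 3 * hanti 3 0 + (b 0 / 2) * hanti 0 0
  have hq1' : -B 0 1 * b 0 - B 1 2 * b 2 - B 1 3 * b 3 = 0 := by linear_combination eq' 1 - b 2 * hanti 2 1 - b 3 * hanti 3 1 - (b 1 / 2) * hanti 1 1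
  have hq2' : -B 0 2 * b 0 + B 1 2 * b 1 - B 2 3 * b 3 = 0 := by linear_combination eq' 2 - b 3 * hanti 3 2 - (b 2 / 2) * hanti 2 2
  have hq3' : -B 0 3 * b 0 + B 1 3 * b 1 + B 2 3 * b 2 = 0 := by linear_combination eq' 3 - (b 3 / 2) * hanti 3 3
  suffices hS : ∃ l : ℝ, B 0 1 = l * (-a 2 * b 3 + a 3 * b 2) ∧ B 0 2 = l * (a 1 * b 3 - a 3 * b 1) ∧ B 0 3 = l * (-a 1 * b 2 + a 2 * b 1) ∧ B 1 2 = l * (a 0 * b 3 - a 3 * b 0) ∧ B 1 3 = l * (-a 0 * b 2 + a 2 * b 0) ∧ B 2 3 = l * (a 0 * b 1 - a 1 * b 0) by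
    obtain ⟨l, h01, h02, h03, h12, h13, h23⟩ := hS
    refine ⟨l, fun I J => ?_⟩
    fin_cases I <;> fin_cases J
    · show B 0 0 = l * hodge (wedgeV a b) 0 0
      rw [hw00 a b]; simp [hd]
    · show B 0 1 = l * hodge (wedgeV a b) 0 1
      rw [hw01 a b]; exact h01
    · show B 0 2 = l * hodge (wedgeV a b) 0 2
      rw [hw02 a b]; exact h02
    · show B 0 3 = l * hodge (wedgeV a b) 0 3
      rw [hw03 a b]; exact h03
    · show B 1 0 = l * hodge (wedgeV a b) 1 0
      rw [hw10 a b]; linear_combination hanti 1 0 - h01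
    · show B 1 1 = l * hodge (wedgeV a b) 1 1
      rw [hw11 a b]; simp [hd]
    · show B 1 2 = l * hodge (wedgeV a b) 1 2
      rw [hw12 a b]; exact h12
    · show B 1 3 = l * hodge (wedgeV a b) 1 3
      rw [hw13 a b]; exact h13
    · show B 2 0 = l * hodge (wedgeV a b) 2 0
      rw [hw20 a b]; linear_combination hanti 2 0 - h02
    · show B 2 1 = l * hodge (wedgeV a b) 2 1
      rw [hw21 a b]; linear_combination hanti 2 1 - h12
    · show B 2 2 = l * hodge (wedgeV a b) 2 2
      rw [hw22 a b]; simp [hd]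
    · show B 2 3 = l * hodge (wedgeV a b) 2 3
      rw [hw23 a b]; exact h23
    · show B 3 0 = l * hodge (wedgeV a b) 3 0
      rw [hw30 a b]; linear_combination hanti 3 0 - h03
    · show B 3 1 = l * hodge (wedgeV a b) 3 1
      rw [hw31 a b]; linear_combination hanti 3 1 - h13
    · show B 3 2 = l * hodge (wedgeV a b) 3 2
      rw [hw32 a b]; linear_combination hanti 3 2 - h23
    · show B 3 3 = l * hodge (wedgeV a b) 3 3
      rw [hw33 a b]; simp [hd]
  obtain ⟨i, j, hij⟩ := hm
  fin_cases i <;> fin_cases j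
  · exact absurd rfl hij
  · exact simpCase01 (a 0) (a 1) (a 2) (a 3) (b 0) (b 1) (b 2) (b 3) (B 0 1) (B 0 2) (B 0 3) (B 1 2) (B 1 3) (B 2 3)
      hp0' hp1' hp2' hp3' hq0' hq1' hq2' hq3' (sub_ne_zero.mpr hij)
  · exact simpCase02 (a 0) (a 1) (a 2) (a 3) (b 0) (b 1) (b 2) (b 3) (B 0 1) (B 0 2) (B 0 3) (B 1 2) (B 1 3) (B 2 3)
      hp0' hp1' hp2' hp3' hq0' hq1' hq2' hq3' (sub_ne_zero.mpr hij)
  · exact simpCase03 (a 0) (a 1) (a 2) (a 3) (b 0) (b 1) (b 2) (b 3) (B 0 1) (B 0 2) (B 0 3) (B 1 2) (B 1 3) (B 2 3)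
      hp0' hp1' hp2' hp3' hq0' hq1' hq2' hq3' (sub_ne_zero.mpr hij)
  · exact simpCase01 (a 0) (a 1) (a 2) (a 3) (b 0) (b 1) (b 2) (b 3) (B 0 1) (B 0 2) (B 0 3) (B 1 2) (B 1 3) (B 2 3)
      hp0' hp1' hp2' hp3' hq0' hq1' hq2' hq3' (sub_ne_zero.mpr (Ne.symm hij))
  · exact absurd rfl hij
  · exact simpCase12 (a 0) (a 1) (a 2) (a 3) (b 0) (b 1) (b 2) (b 3) (B 0 1) (B 0 2) (B 0 3) (B 1 2) (B 1 3) (B 2 3)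
      hp0' hp1' hp2' hp3' hq0' hq1' hq2' hq3' (sub_ne_zero.mpr hij)
  · exact simpCase13 (a 0) (a 1) (a 2) (a 3) (b 0) (b 1) (b 2) (b 3) (B 0 1) (B 0 2) (B 0 3) (B 1 2) (B 1 3) (B 2 3)
      hp0' hp1' hp2' hp3' hq0' hq1' hq2' hq3' (sub_ne_zero.mpr hij)
  · exact simpCase02 (a 0) (a 1) (a 2) (a 3) (b 0) (b 1) (b 2) (b 3) (B 0 1) (B 0 2) (B 0 3) (B 1 2) (B 1 3) (B 2 3)
      hp0' hp1' hp2' hp3' hq0' hq1' hq2' hq3' (sub_ne_zero.mpr (Ne.symm hij))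
  · exact simpCase12 (a 0) (a 1) (a 2) (a 3) (b 0) (b 1) (b 2) (b 3) (B 0 1) (B 0 2) (B 0 3) (B 1 2) (B 1 3) (B 2 3)
      hp0' hp1' hp2' hp3' hq0' hq1' hq2' hq3' (sub_ne_zero.mpr (Ne.symm hij))
  · exact absurd rfl hij
  · exact simpCase23 (a 0) (a 1) (a 2) (a 3) (b 0) (b 1) (b 2) (b 3) (B 0 1) (B 0 2) (B 0 3) (B 1 2) (B 1 3) (B 2 3)
      hp0' hp1' hp2' hp3' hq0' hq1' hq2' hq3' (sub_ne_zero.mpr hij)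
  · exact simpCase03 (a 0) (a 1) (a 2) (a 3) (b 0) (b 1) (b 2) (b 3) (B 0 1) (B 0 2) (B 0 3) (B 1 2) (B 1 3) (B 2 3)
      hp0' hp1' hp2' hp3' hq0' hq1' hq2' hq3' (sub_ne_zero.mpr (Ne.symm hij))
  · exact simpCase13 (a 0) (a 1) (a 2) (a 3) (b 0) (b 1) (b 2) (b 3) (B 0 1) (B 0 2) (B 0 3) (B 1 2) (B 1 3) (B 2 3)
      hp0' hp1' hp2' hp3' hq0' hq1' hq2' hq3' (sub_ne_zero.mpr (Ne.symm hij))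
  · exact simpCase23 (a 0) (a 1) (a 2) (a 3) (b 0) (b 1) (b 2) (b 3) (B 0 1) (B 0 2) (B 0 3) (B 1 2) (B 1 3) (B 2 3)
      hp0' hp1' hp2' hp3' hq0' hq1' hq2' hq3' (sub_ne_zero.mpr (Ne.symm hij))
  · exact absurd rfl hij

/-- Characterization of the solutions of two linear simplicity constraints:
for a basis `n₁,…,n₄` of `ℝ⁴` and an antisymmetric `B`, one has
`n_{P I} B^{IJ} = 0` and `n_{Q I} B^{IJ} = 0` iff `B = λ ∗(n_P ∧ n_Q)`. -/
theorem simplicity_solution_space (n : Fin 4 → Fin 4 → ℝ)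
    (hn : LinearIndependent ℝ n)
    (B : Fin 4 → Fin 4 → ℝ) (hanti : ∀ I J, B I J = -B J I)
    (P Q : Fin 4) (hPQ : P ≠ Q) :
    ((∀ J, (∑ I : Fin 4, ∑ K : Fin 4, eta I K * n P K * B I J) = 0) ∧
     (∀ J, (∑ I : Fin 4, ∑ K : Fin 4, eta I K * n Q K * B I J) = 0)) ↔
    ∃ l : ℝ, ∀ I J, B I J = l * hodge (wedgeV (n P) (n Q)) I J := by
  constructor
  · rintro ⟨h1, h2⟩
    have hp : ∀ J, (∑ I : Fin 4, etaD I * n P I * B I J) = 0 := fun J => by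
      have := h1 J; simp [Fin.sum_univ_four, eta, etaD] at this ⊢; linear_combination this
    have hq : ∀ J, (∑ I : Fin 4, etaD I * n Q I * B I J) = 0 := fun J => by
      have := h2 J; simp [Fin.sum_univ_four, eta, etaD] at this ⊢; linear_combination this
    have hpair : LinearIndependent ℝ ![n P, n Q] := by
      have hinj : Function.Injective ![P, Q] := by
        intro x y hxy
        fin_cases x <;> fin_cases y
        · rfl
        · exact absurd hxy hPQ
        · exact absurd hxy (Ne.symm hPQ)
        · rfl
      have h3 := hn.comp ![P, Q] hinj
      have he : n ∘ ![P, Q] = ![n P, n Q] := by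
        funext x; fin_cases x <;> rfl
      rwa [he] at h3
    exact simpKey (n P) (n Q) B hanti hp hq (simpMinor _ _ hpair)
  · rintro ⟨l, hB⟩
    constructor <;> intro J
    · simp [Fin.sum_univ_four, hB, eta, etaD]
      linear_combination l * hcola (n P) (n Q) J
    · simp [Fin.sum_univ_four, hB, eta, etaD]
      linear_combination l * hcolb (n P) (n Q) J
end
end
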